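/- Let N ≥ 1 and let z ∈ ℍ with y = Im(z). Then for every complex s with Re(s) > 1, ∑_{d | N} μ(d) · d^{-s} · E_∞(Nz/d, s) = N^s · ζ_N(2s) · ∑_{(m,n) ∈ ℤ², gcd(mN, n) = 1} y^s / |mNz + n|^{2s}, where μ is the Möbius function and the sum on the right converges absolutely. -/

import Mathlib

/-!
Write `F(m, n) = y^s / |mNz + n|^{2s}`. Substituting `n ↦ dn` gives
`d^{-s} E_∞(Nz/d, s) = N^s ∑_{d ∣ n} F(m, n)`, so by Möbius inversion over `d ∣ N` the left-hand
side is `N^s` times the sum of `F` over the pairs with `gcd(N, n) = 1`. Each such nonzero pair is uniquely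
`g • (m', n')` with `g = gcd(m, n)` prime to `N` and `gcd(m'N, n') = 1`, and `F` is homogeneous of
degree `-2s`, so that sum factors as `ζ_N(2s)` times the sum over the primitive pairs.
-/

noncomputable section
open Complex Real MeasureTheory UpperHalfPlane Filter Topology
open scoped UpperHalfPlane

/-- The Epstein zeta function (real-analytic Eisenstein series)
`E_∞(w,s) = ∑_{(m,n) ∈ ℤ²∖{0}} (Im w)^s / |mw+n|^{2s}`
(defined for any `w : ℂ`, intended for `Im w > 0` and `Re s > 1`). -/
def Eis (w : ℂ) (s : ℂ) : ℂ :=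
  ∑' p : {p : ℤ × ℤ // p ≠ 0},
    (w.im : ℂ) ^ s / (((‖((p : ℤ × ℤ).1 : ℂ) * w + ((p : ℤ × ℤ).2 : ℂ)‖ : ℝ) : ℂ)) ^ (2 * s)

/-- `ζ_N(s) = ∑_{n ≥ 1, gcd(n,N) = 1} n^{-s}`. -/
def zetaN (N : ℕ) (s : ℂ) : ℂ :=
  ∑' n : {n : ℕ // 0 < n ∧ Nat.Coprime n N}, (((n : ℕ) : ℂ)) ^ (-s)

/-- The summand of `Eis w s` at `p`, with `Im w` replaced by a free `y`, so that the right-hand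
side is the case `w = Nz`, `y = Im z`. -/
def epsteinSummand (w : ℂ) (y : ℝ) (s : ℂ) (p : ℤ × ℤ) : ℂ :=
  (y : ℂ) ^ s / ((‖(p.1 : ℂ) * w + p.2‖ : ℝ) : ℂ) ^ (2 * s)

lemma epsteinSummand_zero (w : ℂ) (y : ℝ) {s : ℂ} (hs : s ≠ 0) : epsteinSummand w y s 0 = 0 := by
  simp [epsteinSummand, hs]

lemma norm_epsteinSummand (w : ℂ) {y : ℝ} (hy : 0 < y) {s : ℂ} (hs : s.re ≠ 0) (p : ℤ × ℤ) :
    ‖epsteinSummand w y s p‖ = y ^ s.re * ‖(p.1 : ℂ) * w + p.2‖ ^ (-(2 * s.re)) := by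
  rw [epsteinSummand, norm_div, norm_cpow_eq_rpow_re_of_pos hy,
    norm_cpow_eq_rpow_re_of_nonneg (norm_nonneg _) (by simpa using hs),
    Real.rpow_neg (norm_nonneg _), div_eq_mul_inv]
  simp

lemma summable_norm_linear_rpow {w : ℂ} (hw : 0 < w.im) {c : ℝ} (hc : 2 < c) :
    Summable fun p : ℤ × ℤ => ‖(p.1 : ℂ) * w + p.2‖ ^ (-c) := by
  have hbase : Summable fun p : ℤ × ℤ => ‖(finTwoArrowEquiv ℤ).symm p‖ ^ (-c) :=
    (finTwoArrowEquiv ℤ).symm.summable_iff.mpr (EisensteinSeries.summable_one_div_norm_rpow hc)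
  refine .of_nonneg_of_le (fun p => by positivity) (fun p => ?_)
    (hbase.mul_left (EisensteinSeries.r ⟨w, hw⟩ ^ (-c)))
  simpa [finTwoArrowEquiv] using
    EisensteinSeries.summand_bound ⟨w, hw⟩ (by linarith) ((finTwoArrowEquiv ℤ).symm p)

lemma summable_norm_epsteinSummand {w : ℂ} (hw : 0 < w.im) {y : ℝ} (hy : 0 < y) {s : ℂ}
    (hs : 1 < s.re) : Summable fun p => ‖epsteinSummand w y s p‖ := by
  simp_rw [norm_epsteinSummand w hy (by linarith : s.re ≠ 0)]
  exact (summable_norm_linear_rpow hw (by linarith)).mul_left _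

lemma epsteinSummand_natCast_smul (w : ℂ) (y : ℝ) (s : ℂ) (g : ℕ) (p : ℤ × ℤ) :
    epsteinSummand w y s ((g : ℤ) • p) = (g : ℂ) ^ (-(2 * s)) * epsteinSummand w y s p := by
  have hnorm : ‖(((g : ℤ) • p).1 : ℂ) * w + ((g : ℤ) • p).2‖ = g * ‖(p.1 : ℂ) * w + p.2‖ := by
    rw [← Complex.norm_natCast g, ← norm_mul, Prod.smul_fst, Prod.smul_snd, smul_eq_mul,
      smul_eq_mul]
    push_cast
    ring_nf
  rw [epsteinSummand, epsteinSummand, hnorm, Complex.ofReal_mul,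
    mul_cpow_ofReal_nonneg (Nat.cast_nonneg g) (norm_nonneg _), cpow_neg, Complex.ofReal_natCast,
    div_mul_eq_div_div_swap, div_eq_inv_mul]

lemma epsteinSummand_mul_im (w : ℂ) {c y : ℝ} (hc : 0 ≤ c) (hy : 0 ≤ y) (s : ℂ) (p : ℤ × ℤ) :
    epsteinSummand w (c * y) s p = (c : ℂ) ^ s * epsteinSummand w y s p := by
  rw [epsteinSummand, epsteinSummand, Complex.ofReal_mul, mul_cpow_ofReal_nonneg hc hy,
    mul_div_assoc]

lemma natCast_cpow_neg_mul_epsteinSummand_div (w : ℂ) {y : ℝ} (hy : 0 ≤ y) {d : ℕ} (hd : d ≠ 0)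
    (s : ℂ) (p : ℤ × ℤ) :
    (d : ℂ) ^ (-s) * epsteinSummand (w / d) (y / d) s p
      = epsteinSummand w y s (p.1, d * p.2) := by
  have hdC : (d : ℂ) ≠ 0 := Nat.cast_ne_zero.mpr hd
  have hnorm : ‖(p.1 : ℂ) * (w / d) + p.2‖ = ‖(p.1 : ℂ) * w + ((d * p.2 : ℤ) : ℂ)‖ / d := by
    rw [← Complex.norm_natCast d, ← norm_div]
    congr 1
    push_cast
    field_simp
  have hds : (d : ℂ) ^ s ≠ 0 := by simp [hdC]
  rw [epsteinSummand, epsteinSummand, hnorm, Complex.ofReal_div, Complex.ofReal_div,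
    div_cpow_ofReal_nonneg hy (Nat.cast_nonneg d), div_cpow_ofReal_nonneg (norm_nonneg _)
    (Nat.cast_nonneg d), Complex.ofReal_natCast, cpow_ofNat_mul (d : ℂ), cpow_neg]
  field_simp

lemma tsum_comp_mul_snd {α : Type*} [AddCommMonoid α] [TopologicalSpace α] (f : ℤ × ℤ → α)
    {d : ℤ} (hd : d ≠ 0) :
    ∑' p : ℤ × ℤ, f (p.1, d * p.2) = ∑' q : ℤ × ℤ, if d ∣ q.2 then f q else 0 := by
  have hinj : Function.Injective fun p : ℤ × ℤ => (p.1, d * p.2) := by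
    intro a b hab
    rw [Prod.mk.injEq] at hab
    exact Prod.ext hab.1 (mul_left_cancel₀ hd hab.2)
  have hsupp : Function.support (fun q : ℤ × ℤ => if d ∣ q.2 then f q else 0)
      ⊆ Set.range fun p : ℤ × ℤ => (p.1, d * p.2) := by
    intro q hq
    obtain ⟨k, hk⟩ : d ∣ q.2 := by by_contra h; simp [h] at hq
    exact ⟨(q.1, k), Prod.ext rfl hk.symm⟩
  rw [← hinj.tsum_eq hsupp]
  simp

lemma natCast_cpow_neg_mul_Eis_div {w : ℂ} (hw : 0 ≤ w.im) {d : ℕ} (hd : d ≠ 0) {s : ℂ}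
    (hs : s ≠ 0) :
    (d : ℂ) ^ (-s) * Eis (w / d) s
      = ∑' q : ℤ × ℤ, if (d : ℤ) ∣ q.2 then epsteinSummand w w.im s q else 0 := by
  have hsupp : Function.support (fun p : ℤ × ℤ => epsteinSummand w w.im s (p.1, d * p.2))
      ⊆ {p | p ≠ 0} := by
    rintro p hp rfl
    exact hp (epsteinSummand_zero w w.im hs)
  calc (d : ℂ) ^ (-s) * Eis (w / d) s
      = ∑' p : {p : ℤ × ℤ // p ≠ 0},
          epsteinSummand w w.im s ((p : ℤ × ℤ).1, d * (p : ℤ × ℤ).2) := by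
        rw [Eis, ← tsum_mul_left]
        refine tsum_congr fun p => ?_
        rw [← natCast_cpow_neg_mul_epsteinSummand_div w hw hd, Complex.div_natCast_im]
        rfl
    _ = ∑' p : ℤ × ℤ, epsteinSummand w w.im s (p.1, d * p.2) :=
        tsum_subtype_eq_of_support_subset hsupp
    _ = _ := tsum_comp_mul_snd _ (Int.natCast_ne_zero.mpr hd)

lemma natCast_cpow_neg_mul_Eis_natCast_mul_div {z : ℂ} (hz : 0 ≤ z.im) (N : ℕ) {d : ℕ}
    (hd : d ≠ 0) {s : ℂ} (hs : s ≠ 0) :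
    (d : ℂ) ^ (-s) * Eis (N * z / d) s
      = (N : ℂ) ^ s * ∑' q : ℤ × ℤ, if (d : ℤ) ∣ q.2 then epsteinSummand (N * z) z.im s q else 0 := by
  have hNz : ((N : ℂ) * z).im = N * z.im := by simp
  rw [natCast_cpow_neg_mul_Eis_div (by rw [hNz]; positivity) hd hs, hNz, ← tsum_mul_left]
  simp_rw [epsteinSummand_mul_im _ (Nat.cast_nonneg N) hz, ← mul_ite_zero, ofReal_natCast]

lemma sum_divisors_moebius_mul_ite_dvd {R : Type*} [Ring R] {N : ℕ} (hN : N ≠ 0) (k : ℤ) (c : R) :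
    ∑ d ∈ N.divisors, ((ArithmeticFunction.moebius d : ℤ) : R) * (if (d : ℤ) ∣ k then c else 0)
      = if Int.gcd N k = 1 then c else 0 := by
  have hfilter : N.divisors.filter (fun d : ℕ => (d : ℤ) ∣ k) = (Int.gcd N k).divisors := by
    ext d
    simp only [Finset.mem_filter, Nat.mem_divisors, Int.natCast_dvd, Int.gcd, Int.natAbs_natCast,
      Nat.dvd_gcd_iff, ne_eq, Nat.gcd_eq_zero_iff, hN, false_and, not_false_eq_true, and_true]
  have hmoebius : ∑ d ∈ (Int.gcd N k).divisors, ((ArithmeticFunction.moebius d : ℤ) : R)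
      = if Int.gcd N k = 1 then 1 else 0 := by
    rw [← ArithmeticFunction.one_apply, ← ArithmeticFunction.coe_moebius_mul_coe_zeta,
      ArithmeticFunction.coe_mul_zeta_apply]
    simp
  simp_rw [mul_ite, mul_zero]
  rw [← Finset.sum_filter, hfilter, ← Finset.sum_mul, hmoebius]
  split_ifs <;> simp

lemma sum_moebius_mul_tsum_ite_dvd {f : ℤ × ℤ → ℂ} (hf : Summable fun p => ‖f p‖) {N : ℕ}
    (hN : N ≠ 0) :
    ∑ d ∈ N.divisors, ((ArithmeticFunction.moebius d : ℤ) : ℂ) *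
        ∑' q : ℤ × ℤ, (if (d : ℤ) ∣ q.2 then f q else 0)
      = ∑' q : ℤ × ℤ, if Int.gcd N q.2 = 1 then f q else 0 := by
  have hsummable (d : ℕ) : Summable fun q : ℤ × ℤ => if (d : ℤ) ∣ q.2 then f q else 0 :=
    Summable.of_norm_bounded hf fun q => by split_ifs <;> simp
  simp_rw [← tsum_mul_left]
  rw [← Summable.tsum_finsetSum fun d _ => (hsummable d).mul_left _]
  simp_rw [sum_divisors_moebius_mul_ite_dvd hN]

lemma Int.gcd_mul_eq_one_iff {m k n : ℤ} :
    Int.gcd (m * k) n = 1 ↔ Int.gcd m n = 1 ∧ Int.gcd k n = 1 := by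
  simp only [← Int.isCoprime_iff_gcd_eq_one, IsCoprime.mul_left_iff]

lemma Int.gcd_natCast_smul (g : ℕ) (p : ℤ × ℤ) :
    Int.gcd ((g : ℤ) • p).1 ((g : ℤ) • p).2 = g * Int.gcd p.1 p.2 := by
  simp [Int.gcd_mul_left]

section CoprimeDecomposition

variable (N : ℕ)

def scaleCoprime (x : {n : ℕ // 0 < n ∧ n.Coprime N} × {p : ℤ × ℤ // Int.gcd (p.1 * N) p.2 = 1}) :
    ℤ × ℤ :=
  ((x.1 : ℕ) : ℤ) • (x.2 : ℤ × ℤ)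

lemma gcd_scaleCoprime_snd (x) : Int.gcd N (scaleCoprime N x).2 = 1 := by
  obtain ⟨⟨g, -, hgN⟩, ⟨p, hp⟩⟩ := x
  have hNg : IsCoprime (N : ℤ) g := by
    rw [Int.isCoprime_iff_gcd_eq_one, Int.gcd_natCast_natCast]
    exact hgN.symm
  rw [← Int.isCoprime_iff_gcd_eq_one]
  exact hNg.mul_right (Int.isCoprime_iff_gcd_eq_one.mpr (Int.gcd_mul_eq_one_iff.mp hp).2)

lemma scaleCoprime_injective : Function.Injective (scaleCoprime N) := by
  rintro ⟨⟨g, hg, _⟩, ⟨p, hp⟩⟩ ⟨⟨g', _, _⟩, ⟨p', hp'⟩⟩ h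
  simp only [scaleCoprime] at h
  have hgg' : g = g' := by
    have hgcd := congrArg (fun q : ℤ × ℤ => Int.gcd q.1 q.2) h
    simp only [Int.gcd_natCast_smul, (Int.gcd_mul_eq_one_iff.mp hp).1,
      (Int.gcd_mul_eq_one_iff.mp hp').1, mul_one] at hgcd
    exact hgcd
  subst hgg'
  have hpp' : p = p' := smul_right_injective (ℤ × ℤ) (by omega : (g : ℤ) ≠ 0) h
  subst hpp'
  rfl

lemma support_ite_gcd_subset_range_scaleCoprime {f : ℤ × ℤ → ℂ} (hf0 : f 0 = 0) :
    Function.support (fun q : ℤ × ℤ => if Int.gcd N q.2 = 1 then f q else 0)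
      ⊆ Set.range (scaleCoprime N) := by
  intro q hq
  have hNq : Int.gcd N q.2 = 1 := by by_contra h; simp [h] at hq
  have hq0 : q ≠ 0 := by rintro rfl; simp [hf0] at hq
  obtain ⟨g, m, n, hg, hmn, hm, hn⟩ := Int.exists_gcd_one' (Int.gcd_pos_iff.mpr (by
    by_contra! h; exact hq0 (Prod.ext h.1 h.2)))
  have hNng : IsCoprime (N : ℤ) (n * g) := by rw [← hn]; exact Int.isCoprime_iff_gcd_eq_one.mpr hNq
  have hgN : g.Coprime N := by
    have := Int.isCoprime_iff_gcd_eq_one.mp hNng.of_mul_right_right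
    rw [Int.gcd_natCast_natCast] at this
    exact Nat.coprime_comm.mp this
  have hmnN : Int.gcd (m * N) n = 1 :=
    Int.gcd_mul_eq_one_iff.mpr ⟨hmn, Int.isCoprime_iff_gcd_eq_one.mp hNng.of_mul_right_left⟩
  refine ⟨(⟨g, hg, hgN⟩, ⟨(m, n), hmnN⟩), Prod.ext ?_ ?_⟩
  · simp [scaleCoprime, hm, mul_comm]
  · simp [scaleCoprime, hn, mul_comm]

lemma tsum_ite_gcd_eq_one_eq_mul {f : ℤ × ℤ → ℂ} {t : ℂ} (ht : 1 < t.re)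
    (hf : Summable fun p => ‖f p‖) (hf0 : f 0 = 0)
    (hsmul : ∀ (g : ℕ) (p : ℤ × ℤ), f ((g : ℤ) • p) = (g : ℂ) ^ (-t) * f p) :
    ∑' q : ℤ × ℤ, (if Int.gcd N q.2 = 1 then f q else 0)
      = (∑' n : {n : ℕ // 0 < n ∧ n.Coprime N}, ((n : ℕ) : ℂ) ^ (-t)) *
          ∑' p : {p : ℤ × ℤ // Int.gcd (p.1 * N) p.2 = 1}, f p := by
  have hzeta : Summable fun n : {n : ℕ // 0 < n ∧ n.Coprime N} => ‖((n : ℕ) : ℂ) ^ (-t)‖ := by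
    refine ((Real.summable_nat_rpow.mpr (by simp; linarith : (-t).re < -1)).comp_injective
      Subtype.val_injective).congr fun n => ?_
    simp [norm_natCast_cpow_of_pos n.2.1]
  rw [tsum_mul_tsum_of_summable_norm hzeta (hf.comp_injective Subtype.val_injective),
    ← (scaleCoprime_injective N).tsum_eq (support_ite_gcd_subset_range_scaleCoprime N hf0)]
  refine tsum_congr fun x => ?_
  rw [if_pos (gcd_scaleCoprime_snd N x), scaleCoprime, hsmul]

end CoprimeDecomposition

/-- for `N ≥ 1`, `z ∈ ℍ` with `y = Im z` and `Re s > 1`,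
`∑_{d ∣ N} μ(d) d^{-s} E_∞(Nz/d, s) = N^s ζ_N(2s) ∑_{(m,n), gcd(mN,n)=1} y^s / |mNz+n|^{2s}`,
the sum on the right converging absolutely. -/
theorem stmt3 (N : ℕ) (hN : 1 ≤ N) (z : ℍ) (s : ℂ) (hs : 1 < s.re) :
    Summable (fun p : {p : ℤ × ℤ // Int.gcd (p.1 * (N : ℤ)) p.2 = 1} =>
      ‖((z.im : ℝ) : ℂ) ^ s /
        (((‖((p : ℤ × ℤ).1 : ℂ) * (N : ℂ) * (z : ℂ) + ((p : ℤ × ℤ).2 : ℂ)‖ : ℝ) : ℂ)) ^ (2 * s)‖) ∧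
    (∑ d ∈ N.divisors,
        ((ArithmeticFunction.moebius d : ℤ) : ℂ) * ((d : ℂ) ^ (-s)) * Eis ((N : ℂ) * (z : ℂ) / (d : ℂ)) s)
      = (N : ℂ) ^ s * zetaN N (2 * s) *
          ∑' p : {p : ℤ × ℤ // Int.gcd (p.1 * (N : ℤ)) p.2 = 1},
            ((z.im : ℝ) : ℂ) ^ s /
              (((‖((p : ℤ × ℤ).1 : ℂ) * (N : ℂ) * (z : ℂ) + ((p : ℤ × ℤ).2 : ℂ)‖ : ℝ) : ℂ)) ^ (2 * s) := by
  have hs0 : s ≠ 0 := by rintro rfl; simp at hs; linarith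
  have hw : 0 < ((N : ℂ) * z).im := by simpa using mul_pos (by exact_mod_cast hN) z.im_pos
  set F := epsteinSummand ((N : ℂ) * z) z.im s
  have hF : ∀ p : ℤ × ℤ, ((z.im : ℝ) : ℂ) ^ s / ((‖(p.1 : ℂ) * N * z + p.2‖ : ℝ) : ℂ) ^ (2 * s)
      = F p := fun p => by simp only [F, epsteinSummand, mul_assoc]
  have hFsum : Summable fun p => ‖F p‖ := summable_norm_epsteinSummand hw z.im_pos hs
  simp_rw [hF]
  refine ⟨hFsum.comp_injective Subtype.val_injective, ?_⟩
  calc ∑ d ∈ N.divisors, ((ArithmeticFunction.moebius d : ℤ) : ℂ) * (d : ℂ) ^ (-s)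
        * Eis ((N : ℂ) * z / d) s
      = (N : ℂ) ^ s * ∑ d ∈ N.divisors, ((ArithmeticFunction.moebius d : ℤ) : ℂ) *
          ∑' q : ℤ × ℤ, (if (d : ℤ) ∣ q.2 then F q else 0) := by
        rw [Finset.mul_sum]
        refine Finset.sum_congr rfl fun d hd => ?_
        rw [mul_assoc, natCast_cpow_neg_mul_Eis_natCast_mul_div z.im_pos.le N
          (Nat.pos_of_mem_divisors hd).ne' hs0, mul_left_comm]
        rfl
    _ = (N : ℂ) ^ s * ∑' q : ℤ × ℤ, if Int.gcd N q.2 = 1 then F q else 0 := by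
        rw [sum_moebius_mul_tsum_ite_dvd hFsum (by omega)]
    _ = _ := by
        rw [tsum_ite_gcd_eq_one_eq_mul N (by simp; linarith) hFsum
          (epsteinSummand_zero _ _ hs0) (epsteinSummand_natCast_smul _ _ _), zetaN, mul_assoc]
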